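/- Let g = (g₁,…,g_K) be any potentials, let I ∈ {1,…,K}, and let g' be obtained from g by setting g'_I := g_I + η log μ_I − η log(Σ_{A∈S_K^L(I)} P_I#π_A(g)) pointwise on 𝒳_I and g'_i := g_i for i ≠ I. Then 𝒢^L(g) − 𝒢^L(g') = D_KL(μ_I ‖ Σ_{A∈S_K^L(I)} P_I#π_A(g)). -/

import Mathlib

open scoped ENNReal BigOperators

noncomputable section

/-- `S_K^L`: the nonempty subsets of `{1,…,K}` of size at most `L`. -/
def SKL (K L : ℕ) : Finset (Finset (Fin K)) :=
  Finset.univ.filter fun A => A.Nonempty ∧ A.card ≤ L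

/-- `S_K^L(i)`: the members of `S_K^L` containing `i`. -/
def SKLi (K L : ℕ) (i : Fin K) : Finset (Finset (Fin K)) :=
  (SKL K L).filter fun A => i ∈ A

variable {K : ℕ} (𝒳 : Fin K → Type*) [∀ i, Fintype (𝒳 i)] [∀ i, DecidableEq (𝒳 i)]

/-- The `i`-th marginal `Pᵢ#π_A` of a coupling `π_A` on `𝒳^A`
(zero when `i ∉ A`). -/
def marg (A : Finset (Fin K)) (π : ((j : A) → 𝒳 j.1) → ℝ) (i : Fin K) (xi : 𝒳 i) : ℝ :=
  if hi : i ∈ A then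
    ∑ x : (j : A) → 𝒳 j.1, (if x ⟨i, hi⟩ = xi then π x else 0)
  else 0

/-- `Σ_{A ∈ S_K^L(i)} Pᵢ#π_A`, evaluated at `xi`. -/
def totMarg (L : ℕ) (π : (A : Finset (Fin K)) → ((j : A) → 𝒳 j.1) → ℝ)
    (i : Fin K) (xi : 𝒳 i) : ℝ :=
  ∑ A ∈ SKLi K L i, marg 𝒳 A (π A) i xi

/-- The couplings `π_A(g)` induced by potentials `g`, interpreted as `0` where the
cost is `+∞`. -/
def piInd (η : ℝ) (c : (A : Finset (Fin K)) → ((j : A) → 𝒳 j.1) → ℝ≥0∞)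
    (g : (i : Fin K) → 𝒳 i → ℝ) (A : Finset (Fin K)) (x : (j : A) → 𝒳 j.1) : ℝ :=
  if c A x = ⊤ then 0
  else Real.exp ((∑ j : A, g j.1 (x j) - (1 + (c A x).toReal)) / η)

/-- The dual objective `𝒢^L`. -/
def dualObj (η : ℝ) (L : ℕ) (c : (A : Finset (Fin K)) → ((j : A) → 𝒳 j.1) → ℝ≥0∞)
    (μ : (i : Fin K) → 𝒳 i → ℝ) (g : (i : Fin K) → 𝒳 i → ℝ) : ℝ :=
  (∑ A ∈ SKL K L, ∑ x : (j : A) → 𝒳 j.1, piInd 𝒳 η c g A x)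
    - (1 / η) * ∑ i : Fin K, ∑ xi : 𝒳 i, g i xi * μ i xi

/-- Unnormalized Kullback–Leibler divergence (convention `0 · log 0 = 0`). -/
def KLdiv {Z : Type*} [Fintype Z] (α β : Z → ℝ) : ℝ :=
  (∑ z, (β z - α z)) + ∑ z, α z * Real.log (α z / β z)

/-- ℓ¹ norm of a vector on a finite set. -/
def l1 {Z : Type*} [Fintype Z] (v : Z → ℝ) : ℝ := ∑ z, |v z|

/-- `g : ℕ → potentials` is generated by the greedy Sinkhorn iteration: `g⁰ = 0`,
and at each step a coordinate `I` maximizing the KL-discrepancy of the `I`-th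
marginal is updated by the Sinkhorn formula, all others kept fixed. -/
def IsGreedySinkhorn (η : ℝ) (L : ℕ)
    (c : (A : Finset (Fin K)) → ((j : A) → 𝒳 j.1) → ℝ≥0∞)
    (μ : (i : Fin K) → 𝒳 i → ℝ) (g : ℕ → (i : Fin K) → 𝒳 i → ℝ) : Prop :=
  (∀ i xi, g 0 i xi = 0) ∧
  ∀ t : ℕ, ∃ I : Fin K,
    (∀ i : Fin K,
      KLdiv (μ i) (totMarg 𝒳 L (piInd 𝒳 η c (g t)) i) ≤
        KLdiv (μ I) (totMarg 𝒳 L (piInd 𝒳 η c (g t)) I)) ∧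
    (∀ xI : 𝒳 I, g (t + 1) I xI =
      g t I xI + η * Real.log (μ I xI)
        - η * Real.log (totMarg 𝒳 L (piInd 𝒳 η c (g t)) I xI)) ∧
    (∀ i : Fin K, i ≠ I → g (t + 1) i = g t i)

/-- The marginal error `E_t` of the greedy Sinkhorn iteration. -/
def Err (η : ℝ) (L : ℕ) (c : (A : Finset (Fin K)) → ((j : A) → 𝒳 j.1) → ℝ≥0∞)
    (μ : (i : Fin K) → 𝒳 i → ℝ) (g : ℕ → (i : Fin K) → 𝒳 i → ℝ) (t : ℕ) : ℝ :=
  ∑ i : Fin K,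
    l1 (fun xi : 𝒳 i => μ i xi - totMarg 𝒳 L (piInd 𝒳 η c (g t)) i xi)

/-- `C* := maxᵢ nᵢ / n`. -/
def Cstar (n : ℝ) : ℝ := ((Finset.univ.sup fun i : Fin K => Fintype.card (𝒳 i) : ℕ) : ℝ) / n

/-- `min_{j, y} μ_j(y)`. -/
def muMin (μ : (i : Fin K) → 𝒳 i → ℝ) : ℝ :=
  sInf {v : ℝ | ∃ (j : Fin K) (y : 𝒳 j), v = μ j y}

/-- `R̄ := L − η log min_{j,y} μ_j(y) + η L log(K C* n)`. -/
def Rbar (η : ℝ) (L : ℕ) (n : ℝ) (μ : (i : Fin K) → 𝒳 i → ℝ) : ℝ :=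
  (L : ℝ) - η * Real.log (muMin 𝒳 μ) + η * L * Real.log (K * Cstar 𝒳 n * n)

/-! The Sinkhorn step adds `η log (μ_I / m)` to `g_I`, where `m = Σ_{A ∋ I} P_I#π_A(g)`. This
multiplies every coupling `π_A` with `I ∈ A` by `(μ_I / m)(x_I)` and leaves the others unchanged,
so the total mass of the couplings changes by `Σ (μ_I / m - 1) m = Σ (μ_I - m)`, while the linear
term changes by `Σ μ_I log (μ_I / m)`. Together these are `D_KL(μ_I ‖ m)`. -/

section InducedCouplings

open Finset Real

variable (𝒳 : Fin K → Type*)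

lemma piInd_nonneg (η : ℝ) (c : (A : Finset (Fin K)) → ((j : A) → 𝒳 j.1) → ℝ≥0∞)
    (g : (i : Fin K) → 𝒳 i → ℝ) (A : Finset (Fin K)) (x : (j : A) → 𝒳 j.1) :
    0 ≤ piInd 𝒳 η c g A x := by
  unfold piInd
  split
  · exact le_rfl
  · exact (exp_pos _).le

variable {η : ℝ} {c : (A : Finset (Fin K)) → ((j : A) → 𝒳 j.1) → ℝ≥0∞}
  {g g' : (i : Fin K) → 𝒳 i → ℝ} {I : Fin K}

lemma piInd_congr {A : Finset (Fin K)} (h : ∀ j ∈ A, g' j = g j) (x : (j : A) → 𝒳 j.1) :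
    piInd 𝒳 η c g' A x = piInd 𝒳 η c g A x := by
  have hsum : ∑ j : A, g' j.1 (x j) = ∑ j : A, g j.1 (x j) :=
    sum_congr rfl fun j _ => by rw [h j.1 j.2]
  simp only [piInd, hsum]

lemma piInd_update (hη : η ≠ 0) {ρ : 𝒳 I → ℝ} (hρ : ∀ xI, 0 < ρ xI)
    (hI : ∀ xI, g' I xI = g I xI + η * log (ρ xI)) (hfix : ∀ i, i ≠ I → g' i = g i)
    {A : Finset (Fin K)} (hi : I ∈ A) (x : (j : A) → 𝒳 j.1) :
    piInd 𝒳 η c g' A x = piInd 𝒳 η c g A x * ρ (x ⟨I, hi⟩) := by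
  have hsum : ∑ j : A, g' j.1 (x j) = ∑ j : A, g j.1 (x j) + η * log (ρ (x ⟨I, hi⟩)) := by
    rw [← sub_eq_iff_eq_add', ← sum_sub_distrib,
      sum_eq_single_of_mem (⟨I, hi⟩ : A) (mem_univ _) fun j _ hj => ?_, hI, add_sub_cancel_left]
    rw [hfix j.1 fun h => hj (Subtype.ext h), sub_self]
  unfold piInd
  split
  · rw [zero_mul]
  · rw [hsum]
    conv_rhs => rw [← exp_log (hρ (x ⟨I, hi⟩)), ← exp_add]
    congr 1
    field_simp
    ring

lemma sum_sum_mul_sub_sum_sum_mul [∀ i, Fintype (𝒳 i)] (μ : (i : Fin K) → 𝒳 i → ℝ)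
    (hfix : ∀ i, i ≠ I → g' i = g i) :
    ∑ i, ∑ xi, g' i xi * μ i xi - ∑ i, ∑ xi, g i xi * μ i xi =
      ∑ xI, (g' I xI - g I xI) * μ I xI := by
  rw [← sum_sub_distrib, sum_eq_single I (fun i _ hi => by rw [hfix i hi, sub_self])
    (fun h => absurd (mem_univ I) h), ← sum_sub_distrib]
  simp only [sub_mul]

end InducedCouplings

section Marginals

open Finset Real

lemma marg_nonneg {A : Finset (Fin K)} {p : ((j : A) → 𝒳 j.1) → ℝ} (hp : ∀ x, 0 ≤ p x)
    (i : Fin K) (xi : 𝒳 i) : 0 ≤ marg 𝒳 A p i xi := by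
  unfold marg
  split
  · exact sum_nonneg fun x _ => by split <;> simp [hp x]
  · exact le_rfl

lemma sum_mul_marg {A : Finset (Fin K)} (p : ((j : A) → 𝒳 j.1) → ℝ) {i : Fin K} (hi : i ∈ A)
    (f : 𝒳 i → ℝ) :
    ∑ xi, f xi * marg 𝒳 A p i xi = ∑ x, p x * f (x ⟨i, hi⟩) := by
  simp only [marg, dif_pos hi, mul_sum, mul_ite, mul_zero]
  rw [sum_comm]
  simp [mul_comm]

lemma singleton_mem_SKLi {K L : ℕ} (hL : 1 ≤ L) (i : Fin K) : {i} ∈ SKLi K L i := by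
  simp [SKLi, SKL, hL]

lemma marg_singleton_piInd_pos (η : ℝ) (c : (A : Finset (Fin K)) → ((j : A) → 𝒳 j.1) → ℝ≥0∞)
    (g : (i : Fin K) → 𝒳 i → ℝ) {i : Fin K} (hc : ∀ x, c {i} x ≠ ⊤) (xi : 𝒳 i) :
    0 < marg 𝒳 {i} (piInd 𝒳 η c g {i}) i xi := by
  have hi : i ∈ ({i} : Finset (Fin K)) := mem_singleton_self i
  let x₀ : (j : ({i} : Finset (Fin K))) → 𝒳 j.1 :=
    fun j => cast (congrArg 𝒳 (mem_singleton.mp j.2).symm) xi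
  have hx₀ : x₀ ⟨i, hi⟩ = xi := rfl
  rw [marg, dif_pos hi]
  refine sum_pos' (fun x _ => ?_) ⟨x₀, mem_univ _, ?_⟩
  · split
    · exact piInd_nonneg 𝒳 η c g _ x
    · exact le_rfl
  · rw [if_pos hx₀, piInd, if_neg (hc x₀)]
    exact exp_pos _

lemma totMarg_piInd_pos {L : ℕ} (hL : 1 ≤ L) (η : ℝ)
    (c : (A : Finset (Fin K)) → ((j : A) → 𝒳 j.1) → ℝ≥0∞) (g : (i : Fin K) → 𝒳 i → ℝ)
    {i : Fin K} (hc : ∀ x, c {i} x ≠ ⊤) (xi : 𝒳 i) :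
    0 < totMarg 𝒳 L (piInd 𝒳 η c g) i xi :=
  sum_pos' (fun A _ => marg_nonneg 𝒳 (piInd_nonneg 𝒳 η c g A) i xi)
    ⟨{i}, singleton_mem_SKLi hL i, marg_singleton_piInd_pos 𝒳 η c g hc xi⟩

variable {η : ℝ} {c : (A : Finset (Fin K)) → ((j : A) → 𝒳 j.1) → ℝ≥0∞}
  {g g' : (i : Fin K) → 𝒳 i → ℝ} {I : Fin K}

lemma sum_piInd_update_of_mem (hη : η ≠ 0) {ρ : 𝒳 I → ℝ} (hρ : ∀ xI, 0 < ρ xI)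
    (hI : ∀ xI, g' I xI = g I xI + η * log (ρ xI)) (hfix : ∀ i, i ≠ I → g' i = g i)
    {A : Finset (Fin K)} (hi : I ∈ A) :
    ∑ x, piInd 𝒳 η c g' A x =
      ∑ x, piInd 𝒳 η c g A x + ∑ xI, (ρ xI - 1) * marg 𝒳 A (piInd 𝒳 η c g A) I xI := by
  rw [sum_mul_marg 𝒳 _ hi, ← sum_add_distrib]
  refine sum_congr rfl fun x _ => ?_
  rw [piInd_update 𝒳 hη hρ hI hfix hi]
  ring

lemma sum_SKL_piInd_update {L : ℕ} (hη : η ≠ 0) {ρ : 𝒳 I → ℝ} (hρ : ∀ xI, 0 < ρ xI)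
    (hI : ∀ xI, g' I xI = g I xI + η * log (ρ xI)) (hfix : ∀ i, i ≠ I → g' i = g i) :
    ∑ A ∈ SKL K L, ∑ x, piInd 𝒳 η c g' A x =
      ∑ A ∈ SKL K L, ∑ x, piInd 𝒳 η c g A x
        + ∑ xI, (ρ xI - 1) * totMarg 𝒳 L (piInd 𝒳 η c g) I xI := by
  have hout : ∀ A ∈ (SKL K L).filter (I ∉ ·),
      ∑ x, piInd 𝒳 η c g' A x = ∑ x, piInd 𝒳 η c g A x := fun A hA =>
    sum_congr rfl fun x _ => piInd_congr 𝒳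
      (fun j hj => hfix j fun h => (mem_filter.mp hA).2 (h ▸ hj)) x
  have hin : ∀ A ∈ SKLi K L I, ∑ x, piInd 𝒳 η c g' A x =
      ∑ x, piInd 𝒳 η c g A x + ∑ xI, (ρ xI - 1) * marg 𝒳 A (piInd 𝒳 η c g A) I xI :=
    fun A hA => sum_piInd_update_of_mem 𝒳 hη hρ hI hfix (mem_filter.mp hA).2
  rw [← sum_filter_add_sum_filter_not (SKL K L) (I ∈ ·),
    ← sum_filter_add_sum_filter_not (SKL K L) (I ∈ ·) (fun A => ∑ x, piInd 𝒳 η c g A x)]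
  change ∑ A ∈ SKLi K L I, _ + _ = ∑ A ∈ SKLi K L I, _ + _ + _
  rw [sum_congr rfl hin, sum_congr rfl hout, sum_add_distrib, sum_comm]
  simp only [totMarg, mul_sum]
  ring

end Marginals

theorem stmt10_general (K L : ℕ) (hL : 1 ≤ L)
    (𝒳 : Fin K → Type*) [∀ i, Fintype (𝒳 i)] [∀ i, DecidableEq (𝒳 i)]
    (η : ℝ) (hη : 0 < η)
    (c : (A : Finset (Fin K)) → ((j : A) → 𝒳 j.1) → ℝ≥0∞)
    (hc : ∀ (i : Fin K) (x : (j : ({i} : Finset (Fin K))) → 𝒳 j.1), c {i} x = 0)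
    (μ : (i : Fin K) → 𝒳 i → ℝ) (hμpos : ∀ i xi, 0 < μ i xi)
    (g g' : (i : Fin K) → 𝒳 i → ℝ) (I : Fin K)
    (hupd : ∀ xI : 𝒳 I, g' I xI =
      g I xI + η * Real.log (μ I xI)
        - η * Real.log (totMarg 𝒳 L (piInd 𝒳 η c g) I xI))
    (hfix : ∀ i : Fin K, i ≠ I → g' i = g i) :
    dualObj 𝒳 η L c μ g - dualObj 𝒳 η L c μ g' =
      KLdiv (μ I) (totMarg 𝒳 L (piInd 𝒳 η c g) I) := by
  set m := totMarg 𝒳 L (piInd 𝒳 η c g) I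
  have hm (xI : 𝒳 I) : 0 < m xI :=
    totMarg_piInd_pos 𝒳 hL η c g (fun x => by simp [hc I x]) xI
  have hstep (xI : 𝒳 I) : g' I xI = g I xI + η * Real.log (μ I xI / m xI) := by
    rw [hupd, Real.log_div (hμpos I xI).ne' (hm xI).ne']
    ring
  have hcoupling := sum_SKL_piInd_update 𝒳 (c := c) (L := L) hη.ne'
    (fun xI => div_pos (hμpos I xI) (hm xI)) hstep hfix
  have hpotential := sum_sum_mul_sub_sum_sum_mul 𝒳 μ hfix
  have hmassChange : ∑ xI, (μ I xI / m xI - 1) * m xI = -∑ xI, (m xI - μ I xI) := by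
    rw [← Finset.sum_neg_distrib]
    exact Finset.sum_congr rfl fun xI _ => by field_simp [(hm xI).ne']; ring
  have hlinear : (1 / η) * ∑ xI, (g' I xI - g I xI) * μ I xI =
      ∑ xI, μ I xI * Real.log (μ I xI / m xI) := by
    rw [Finset.mul_sum]
    exact Finset.sum_congr rfl fun xI _ => by rw [hstep]; field_simp; ring
  unfold dualObj KLdiv
  rw [hcoupling, hmassChange, ← hlinear, ← hpotential]
  ring

/-- one greedy Sinkhorn update at coordinate `I` decreases the dual
objective by exactly `D_KL(μ_I ‖ Σ_{A∈S_K^L(I)} P_I#π_A(g))`. -/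
theorem stmt10 (K L : ℕ) (hK : 0 < K) (hL : 1 ≤ L) (hLK : L ≤ K)
    (𝒳 : Fin K → Type*) [∀ i, Fintype (𝒳 i)] [∀ i, DecidableEq (𝒳 i)]
    [∀ i, Nonempty (𝒳 i)]
    (η : ℝ) (hη : 0 < η)
    (c : (A : Finset (Fin K)) → ((j : A) → 𝒳 j.1) → ℝ≥0∞)
    (hc : ∀ (i : Fin K) (x : (j : ({i} : Finset (Fin K))) → 𝒳 j.1), c {i} x = 0)
    (μ : (i : Fin K) → 𝒳 i → ℝ) (hμpos : ∀ i xi, 0 < μ i xi)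
    (hmass : ∑ i : Fin K, ∑ xi : 𝒳 i, μ i xi = 1)
    (g g' : (i : Fin K) → 𝒳 i → ℝ) (I : Fin K)
    (hupd : ∀ xI : 𝒳 I, g' I xI =
      g I xI + η * Real.log (μ I xI)
        - η * Real.log (totMarg 𝒳 L (piInd 𝒳 η c g) I xI))
    (hfix : ∀ i : Fin K, i ≠ I → g' i = g i) :
    dualObj 𝒳 η L c μ g - dualObj 𝒳 η L c μ g' =
      KLdiv (μ I) (totMarg 𝒳 L (piInd 𝒳 η c g) I) :=
  stmt10_general K L hL 𝒳 η hη c hc μ hμpos g g' I hupd hfix
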